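/- Let X be a compact, connected metric space such that the space C(X) of continuous self-maps of X with the supremum metric is compact, and let f : X → X be continuous. Then (X,f) has shadowing if and only if the sequence of iterates ⟨f^n⟩ converges uniformly to a constant map. -/
import Mathlib

open Filter Metric

/-- The system `(X, f)` has shadowing. -/
def HasShadowing {X : Type*} [MetricSpace X] (f : X → X) : Prop :=
  ∀ ε > (0 : ℝ), ∃ δ > (0 : ℝ), ∀ x : ℕ → X,
    (∀ i : ℕ, dist (f (x i)) (x (i + 1)) < δ) →
      ∃ z : X, ∀ i : ℕ, dist (f^[i] z) (x i) < ε

/-- Quantitative equicontinuity of the iterates, from compactness of `C(X,X)`. -/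
private lemma equicont_of_compactCX {X : Type*} [MetricSpace X] [CompactSpace X]
    (hC : IsCompact (Set.univ : Set C(X, X))) (f : X → X) (hf : Continuous f) :
    ∀ ε > (0 : ℝ), ∃ η > (0 : ℝ), ∀ p q : X, dist p q < η →
      ∀ n : ℕ, dist (f^[n] p) (f^[n] q) < ε := by
  classical
  intro ε hε
  obtain ⟨t, htfin, htcov⟩ :=
    Metric.totallyBounded_iff.mp hC.totallyBounded (ε / 4) (by linarith)
  have hUC : ∀ g : C(X, X), ∃ d > (0 : ℝ), ∀ p q : X, dist p q < d →
      dist (g p) (g q) < ε / 4 := by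
    intro g
    obtain ⟨d, hd, h⟩ := Metric.uniformContinuous_iff.mp
      (CompactSpace.uniformContinuous_of_continuous g.continuous) (ε / 4) (by linarith)
    exact ⟨d, hd, fun p q hpq => h hpq⟩
  choose D hD1 hD2 using hUC
  have hne : t.Nonempty := by
    rcases t.eq_empty_or_nonempty with h | h
    · exfalso
      have := htcov (Set.mem_univ (ContinuousMap.id X))
      simp [h] at this
    · exact h
  have hne' : htfin.toFinset.Nonempty := by
    obtain ⟨g, hg⟩ := hne; exact ⟨g, htfin.mem_toFinset.mpr hg⟩
  refine ⟨htfin.toFinset.inf' hne' D, ?_, ?_⟩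
  · have : ∀ g ∈ htfin.toFinset, 0 < D g := fun g _ => hD1 g
    exact (Finset.lt_inf'_iff hne').mpr this
  · intro p q hpq n
    set F : C(X, X) := ⟨f^[n], hf.iterate n⟩ with hF
    have hFmem := htcov (Set.mem_univ F)
    simp only [Set.mem_iUnion] at hFmem
    obtain ⟨g, hg, hball⟩ := hFmem
    have hdFg : dist F g < ε / 4 := mem_ball.mp hball
    have h1 : dist (f^[n] p) (g p) ≤ dist F g :=
      ContinuousMap.dist_apply_le_dist (f := F) (g := g) p
    have h2 : dist (g q) (f^[n] q) ≤ dist F g := by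
      rw [dist_comm]; exact ContinuousMap.dist_apply_le_dist (f := F) (g := g) q
    have h3 : dist (g p) (g q) < ε / 4 := by
      apply hD2 g p q
      exact lt_of_lt_of_le hpq (Finset.inf'_le D (htfin.mem_toFinset.mpr hg))
    calc dist (f^[n] p) (f^[n] q)
        ≤ dist (f^[n] p) (g p) + dist (g p) (g q) + dist (g q) (f^[n] q) :=
          dist_triangle4 _ _ _ _
      _ < ε / 4 + ε / 4 + ε / 4 := by
          have := lt_of_le_of_lt h1 hdFg
          have := lt_of_le_of_lt h2 hdFg
          linarith
      _ < ε := by linarith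

/-- In a compact connected metric space, for every `η > 0` there is a uniform bound `K`
such that every two points are joined by an `η`-chain of length exactly `K`. -/
private lemma chain_bound {X : Type*} [MetricSpace X] [CompactSpace X] [ConnectedSpace X]
    (η : ℝ) (hη : 0 < η) :
    ∃ K : ℕ, ∀ p q : X, ∃ c : ℕ → X, c 0 = p ∧ c K = q ∧
      ∀ i < K, dist (c i) (c (i + 1)) < η := by
  classical
  obtain ⟨p₀⟩ : Nonempty X := inferInstance
  set V : ℕ → Set X := fun n =>
    {q | ∃ c : ℕ → X, c 0 = p₀ ∧ c n = q ∧ ∀ i < n, dist (c i) (c (i + 1)) < η} with hV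
  have hV0 : p₀ ∈ V 0 := ⟨fun _ => p₀, rfl, rfl, fun i hi => absurd hi (Nat.not_lt_zero i)⟩
  have hstep : ∀ n (q r : X), q ∈ V n → dist q r < η → r ∈ V (n + 1) := by
    rintro n q r ⟨c, hc0, hcn, hcs⟩ hqr
    refine ⟨fun i => if i ≤ n then c i else r, by simp [hc0], by simp, ?_⟩
    intro i hi
    rcases Nat.lt_succ_iff_lt_or_eq.mp hi with h | h
    · simp only
      rw [if_pos (show i ≤ n by omega), if_pos (show i + 1 ≤ n by omega)]
      exact hcs i h
    · subst h
      simp only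
      rw [if_pos (le_refl i), if_neg (show ¬ i + 1 ≤ i by omega), hcn]
      exact hqr
  have hmono : ∀ m n : ℕ, m ≤ n → V m ⊆ V n := by
    intro m n hmn
    induction hmn with
    | refl => exact subset_rfl
    | step h ih => exact fun q hq => hstep _ q q (ih hq) (by simpa using hη)
  set U : Set X := ⋃ n, V n with hU
  have hUopen : IsOpen U := by
    rw [Metric.isOpen_iff]
    rintro q hq
    refine ⟨η, hη, fun r hr => ?_⟩
    obtain ⟨n, hn⟩ := Set.mem_iUnion.mp hq
    have : r ∈ V (n + 1) := hstep n q r hn (by rw [dist_comm]; exact mem_ball.mp hr)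
    exact Set.mem_iUnion.mpr ⟨n + 1, this⟩
  have hUclosed : IsClosed U := by
    apply isClosed_of_closure_subset
    intro q hq
    obtain ⟨b, hb, hqb⟩ := Metric.mem_closure_iff.mp hq η hη
    obtain ⟨n, hn⟩ := Set.mem_iUnion.mp hb
    have : q ∈ V (n + 1) := hstep n b q hn (by rwa [dist_comm])
    exact Set.mem_iUnion.mpr ⟨n + 1, this⟩
  have hUuniv : U = Set.univ :=
    IsClopen.eq_univ ⟨hUclosed, hUopen⟩ ⟨p₀, Set.mem_iUnion.mpr ⟨0, hV0⟩⟩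
  have hall : ∀ q : X, ∃ n, q ∈ V n := by
    intro q
    have : q ∈ U := hUuniv ▸ Set.mem_univ q
    exact Set.mem_iUnion.mp this
  choose m hm using hall
  obtain ⟨s, hs⟩ := isCompact_univ.elim_finite_subcover (fun q : X => ball q η)
    (fun q => isOpen_ball) (fun x _ => Set.mem_iUnion.mpr ⟨x, mem_ball_self hη⟩)
  set N : ℕ := s.sup m + 1 with hN
  have hNpos : 0 < N := Nat.succ_pos _
  have hallN : ∀ x : X, x ∈ V N := by
    intro x
    have := hs (Set.mem_univ x)
    simp only [Set.mem_iUnion] at this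
    obtain ⟨q, hq, hxq⟩ := this
    have h1 : q ∈ V (s.sup m) := hmono (m q) (s.sup m) (Finset.le_sup hq) (hm q)
    exact hstep _ q x h1 (by rw [dist_comm]; exact mem_ball.mp hxq)
  refine ⟨2 * N, fun p q => ?_⟩
  obtain ⟨c, hc0, hcN, hcs⟩ := hallN p
  obtain ⟨c', hc'0, hc'N, hc's⟩ := hallN q
  refine ⟨fun i => if i ≤ N then c (N - i) else c' (i - N), ?_, ?_, ?_⟩
  · simp [hcN]
  · simp only
    rw [if_neg (show ¬ 2 * N ≤ N by omega)]
    have : 2 * N - N = N := by omega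
    rw [this, hc'N]
  · intro i hi
    rcases lt_or_ge i N with h | h
    · simp only
      rw [if_pos (by omega : i ≤ N), if_pos (by omega : i + 1 ≤ N)]
      have h1 : N - (i + 1) < N := by omega
      have h2 : N - (i + 1) + 1 = N - i := by omega
      have := hcs (N - (i + 1)) h1
      rw [h2] at this
      rw [dist_comm]
      exact this
    · simp only
      rw [if_neg (by omega : ¬ i + 1 ≤ N)]
      have h2 : i + 1 - N = (i - N) + 1 := by omega
      rw [h2]
      rcases eq_or_lt_of_le h with hEq | hlt
      · rw [if_pos (by omega : i ≤ N)]
        have e1 : N - i = 0 := by omega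
        have e2 : i - N = 0 := by omega
        rw [e1, e2, hc0, ← hc'0]
        exact hc's 0 (by omega)
      · rw [if_neg (by omega : ¬ i ≤ N)]
        exact hc's (i - N) (by omega)


/-- Finite-time tracking: pseudo-orbits with small errors stay close to true orbits
for a bounded number of steps. -/
private lemma tracking {X : Type*} [MetricSpace X] [CompactSpace X]
    (f : X → X) (hf : Continuous f) :
    ∀ N : ℕ, ∀ γ > (0 : ℝ), ∃ δ > (0 : ℝ), ∀ x : ℕ → X,
      (∀ i : ℕ, dist (f (x i)) (x (i + 1)) < δ) →
      ∀ i ≤ N, dist (f^[i] (x 0)) (x i) < γ := by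
  intro N
  induction N with
  | zero =>
    intro γ hγ
    refine ⟨γ, hγ, fun x _ i hi => ?_⟩
    interval_cases i
    simpa using hγ
  | succ N ih =>
    intro γ hγ
    obtain ⟨γ₁, hγ₁, hγ₁'⟩ := Metric.uniformContinuous_iff.mp
      (CompactSpace.uniformContinuous_of_continuous hf) (γ / 2) (by linarith)
    obtain ⟨δ₁, hδ₁, hδ₁'⟩ := ih (min γ₁ γ) (lt_min hγ₁ hγ)
    refine ⟨min δ₁ (γ / 2), lt_min hδ₁ (by linarith), fun x hx i hi => ?_⟩
    have hx₁ : ∀ i : ℕ, dist (f (x i)) (x (i + 1)) < δ₁ :=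
      fun i => lt_of_lt_of_le (hx i) (min_le_left _ _)
    rcases Nat.lt_succ_iff_lt_or_eq.mp (Nat.lt_succ_of_le hi) with h | h
    · exact lt_of_lt_of_le (hδ₁' x hx₁ i (Nat.lt_succ_iff.mp h)) (min_le_right _ _)
    · subst h
      have hIH : dist (f^[N] (x 0)) (x N) < γ₁ :=
        lt_of_lt_of_le (hδ₁' x hx₁ N le_rfl) (min_le_left _ _)
      have h1 : dist (f (f^[N] (x 0))) (f (x N)) < γ / 2 := hγ₁' hIH
      have h2 : dist (f (x N)) (x (N + 1)) < γ / 2 :=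
        lt_of_lt_of_le (hx N) (min_le_right _ _)
      calc dist (f^[N + 1] (x 0)) (x (N + 1))
          = dist (f (f^[N] (x 0))) (x (N + 1)) := by rw [Function.iterate_succ_apply']
        _ ≤ dist (f (f^[N] (x 0))) (f (x N)) + dist (f (x N)) (x (N + 1)) :=
            dist_triangle _ _ _
        _ < γ / 2 + γ / 2 := add_lt_add h1 h2
        _ = γ := by ring


/-- Let `X` be a compact connected metric space whose space `C(X, X)` of continuous
self-maps (with the supremum metric, i.e. the topology of uniform convergence) is compact.
Then `(X, f)` has shadowing if and only if the iterates `⟨fⁿ⟩` converge uniformly to a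
constant map. -/
theorem compact_selfmaps_connected_shadowing_iff_const
    {X : Type*} [MetricSpace X] [CompactSpace X] [ConnectedSpace X]
    (hC : IsCompact (Set.univ : Set C(X, X)))
    (f : X → X) (hf : Continuous f) :
    HasShadowing f ↔
      ∃ c : X, TendstoUniformly (fun n (x : X) => f^[n] x) (fun _ => c) atTop := by
  constructor
  · intro hsh
    have key : ∀ ε > (0 : ℝ), ∃ K : ℕ, ∀ x y : X, dist (f^[K] x) (f^[K] y) < ε := by
      intro ε hε
      obtain ⟨η₁, hη₁, hη₁'⟩ := equicont_of_compactCX hC f hf (ε / 2) (by linarith)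
      set ε₁ := min η₁ (ε / 2) with hε₁def
      have hε₁ : 0 < ε₁ := lt_min hη₁ (by linarith)
      obtain ⟨δ, hδ, hδ'⟩ := hsh ε₁ hε₁
      obtain ⟨η₂, hη₂, hη₂'⟩ := equicont_of_compactCX hC f hf δ hδ
      obtain ⟨K, hK⟩ := chain_bound (X := X) η₂ hη₂
      refine ⟨K, fun a y => ?_⟩
      obtain ⟨c, hc0, hcK, hcs⟩ := hK a y
      set x : ℕ → X := fun i => f^[i] (c (min i K)) with hx
      have hpo : ∀ i : ℕ, dist (f (x i)) (x (i + 1)) < δ := by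
        intro i
        rcases lt_or_ge i K with h | h
        · have e1 : min i K = i := min_eq_left h.le
          have e2 : min (i + 1) K = i + 1 := min_eq_left h
          simp only [hx, e1, e2]
          rw [← Function.iterate_succ_apply' f i (c i)]
          exact hη₂' (c i) (c (i + 1)) (hcs i h) (i + 1)
        · have e1 : min i K = K := min_eq_right h
          have e2 : min (i + 1) K = K := min_eq_right (by omega)
          simp only [hx, e1, e2]
          rw [← Function.iterate_succ_apply' f i (c K)]
          simpa using hδ
      obtain ⟨z, hz⟩ := hδ' x hpo
      have hz0 : dist z a < ε₁ := by
        have := hz 0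
        simpa [hx, hc0] using this
      have hzK : dist (f^[K] z) (f^[K] y) < ε₁ := by
        have := hz K
        simpa [hx, hcK] using this
      have h1 : dist (f^[K] z) (f^[K] a) < ε / 2 :=
        hη₁' z a (lt_of_lt_of_le hz0 (min_le_left _ _)) K
      calc dist (f^[K] a) (f^[K] y)
          ≤ dist (f^[K] a) (f^[K] z) + dist (f^[K] z) (f^[K] y) := dist_triangle _ _ _
        _ < ε / 2 + ε / 2 :=
            add_lt_add (by rw [dist_comm]; exact h1)
              (lt_of_lt_of_le hzK (min_le_right _ _))
        _ = ε := by ring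
    have hU : ∀ ε > (0 : ℝ), ∃ K : ℕ, ∀ n ≥ K, ∀ x y : X,
        dist (f^[n] x) (f^[n] y) < ε := by
      intro ε hε
      obtain ⟨K, hK⟩ := key ε hε
      refine ⟨K, fun n hn x y => ?_⟩
      have e : K + (n - K) = n := by omega
      have := hK (f^[n - K] x) (f^[n - K] y)
      rwa [← Function.iterate_add_apply, ← Function.iterate_add_apply, e] at this
    obtain ⟨x₀⟩ : Nonempty X := inferInstance
    have hcauchy : CauchySeq (fun n => f^[n] x₀) := by
      rw [Metric.cauchySeq_iff]
      intro ε hε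
      obtain ⟨K, hK⟩ := hU ε hε
      refine ⟨K, fun m hm n hn => ?_⟩
      rcases le_total m n with h | h
      · have h2 := hK m hm x₀ (f^[n - m] x₀)
        rw [← Function.iterate_add_apply] at h2
        have e2 : m + (n - m) = n := by omega
        rwa [e2] at h2
      · have h2 := hK n hn x₀ (f^[m - n] x₀)
        rw [← Function.iterate_add_apply] at h2
        have e2 : n + (m - n) = m := by omega
        rw [e2] at h2
        simpa [dist_comm] using h2
    obtain ⟨c, hc⟩ := cauchySeq_tendsto_of_complete hcauchy
    refine ⟨c, ?_⟩
    rw [Metric.tendstoUniformly_iff]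
    intro ε hε
    obtain ⟨K, hK⟩ := hU (ε / 2) (by linarith)
    obtain ⟨N₁, hN₁⟩ := Metric.tendsto_atTop.mp hc (ε / 2) (by linarith)
    rw [eventually_atTop]
    refine ⟨max K N₁, fun n hn x => ?_⟩
    have h1 : dist (f^[n] x₀) c < ε / 2 := hN₁ n (le_trans (le_max_right _ _) hn)
    have h2 : dist (f^[n] x₀) (f^[n] x) < ε / 2 := hK n (le_trans (le_max_left _ _) hn) x₀ x
    calc dist c (f^[n] x)
        ≤ dist c (f^[n] x₀) + dist (f^[n] x₀) (f^[n] x) := dist_triangle _ _ _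
      _ < ε / 2 + ε / 2 := add_lt_add (by rw [dist_comm]; exact h1) h2
      _ = ε := by ring
  · rintro ⟨c, hconv⟩ ε hε
    obtain ⟨N, hN⟩ := eventually_atTop.mp
      (Metric.tendstoUniformly_iff.mp hconv (ε / 4) (by linarith))
    obtain ⟨δ, hδ, hδ'⟩ := tracking f hf N (ε / 4) (by linarith)
    refine ⟨δ, hδ, fun x hx => ⟨x 0, fun i => ?_⟩⟩
    rcases le_or_gt i N with h | h
    · exact lt_of_lt_of_le (hδ' x hx i h) (by linarith)
    · have h1 : dist c (f^[i] (x 0)) < ε / 4 := hN i h.le (x 0)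
      set y : ℕ → X := fun j => x (i - N + j) with hy
      have hy0 : y 0 = x (i - N) := by simp [hy]
      have hyN : y N = x i := by
        simp only [hy]
        congr 1
        omega
      have hypo : ∀ j : ℕ, dist (f (y j)) (y (j + 1)) < δ := by
        intro j
        simp only [hy, ← Nat.add_assoc]
        exact hx (i - N + j)
      have h2 : dist (f^[N] (y 0)) (y N) < ε / 4 := hδ' y hypo N le_rfl
      have h3 : dist c (f^[N] (x (i - N))) < ε / 4 := hN N le_rfl (x (i - N))
      rw [hy0, hyN] at h2
      calc dist (f^[i] (x 0)) (x i)
          ≤ dist (f^[i] (x 0)) c + dist c (f^[N] (x (i - N)))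
              + dist (f^[N] (x (i - N))) (x i) := dist_triangle4 _ _ _ _
        _ < ε / 4 + ε / 4 + ε / 4 := by
            refine add_lt_add (add_lt_add ?_ h3) h2
            rw [dist_comm]; exact h1
        _ < ε := by linarith
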